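/- For four points in ℝ^2 forming a 1-cycle in the Vietoris–Rips complex (i.e., an equilateral-diamond-type configuration where the cycle graph on the four points exists at the birthtime and both diagonals exceed twice the deathtime bound 1), the maximal additive lifetime ℓ⁺_max(3,4) equals 1 − 1/√2, realized by the square (rhombus) with vertices (0,0), (2,0), (1,1), (1,−1) rescaled appropriately, i.e., by an equilateral diamond of side length √2. -/

import Mathlib

/-- The point `(a, b)` of the Euclidean plane. -/
noncomputable def pt (a b : ℝ) : EuclideanSpace ℝ (Fin 2) :=
  (WithLp.equiv 2 (Fin 2 → ℝ)).symm ![a, b]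

/-- The Vietoris–Rips birthtime of the 1-cycle with cycle order `y₁, y₃, y₂, y₄`
(so that `y₁y₂` and `y₃y₄` are the diagonals): half the longest cycle edge. -/
noncomputable def vrBirth (y₁ y₂ y₃ y₄ : EuclideanSpace ℝ (Fin 2)) : ℝ :=
  max (max (dist y₁ y₃) (dist y₃ y₂)) (max (dist y₂ y₄) (dist y₄ y₁)) / 2

/-- The Vietoris–Rips deathtime: half of the shorter diagonal. -/
noncomputable def vrDeath (y₁ y₂ y₃ y₄ : EuclideanSpace ℝ (Fin 2)) : ℝ :=
  min (dist y₁ y₂) (dist y₃ y₄) / 2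

/-!
By Euler's quadrilateral inequality the squared diagonals of the cycle sum to at most the
sum of the four squared sides, hence the shorter diagonal is at most `√2` times the longest
side, i.e. `vrDeath ≤ √2 · vrBirth`. So the lifetime is at most `(1 - 1/√2) · vrDeath ≤ 1 - 1/√2`, with
equality for the square of side `√2`, whose diagonals both have length `2`.
-/

theorem dist_sq_add_dist_sq_le_sum_dist_sq {E : Type*} [NormedAddCommGroup E]
    [InnerProductSpace ℝ E] (a b c d : E) :
    dist a b ^ 2 + dist c d ^ 2 ≤
      dist a c ^ 2 + dist c b ^ 2 + dist b d ^ 2 + dist d a ^ 2 := by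
  have euler : dist a c ^ 2 + dist c b ^ 2 + dist b d ^ 2 + dist d a ^ 2 =
      dist a b ^ 2 + dist c d ^ 2 + ‖a + b - c - d‖ ^ 2 := by
    simp only [dist_eq_norm, ← real_inner_self_eq_norm_sq, inner_sub_left, inner_sub_right,
      inner_add_left, inner_add_right]
    linarith [real_inner_comm a b, real_inner_comm a c, real_inner_comm a d,
      real_inner_comm b c, real_inner_comm b d, real_inner_comm c d]
  rw [euler]
  nlinarith [sq_nonneg ‖a + b - c - d‖]

theorem vrDeath_le_sqrt_two_mul_vrBirth (y₁ y₂ y₃ y₄ : EuclideanSpace ℝ (Fin 2)) :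
    vrDeath y₁ y₂ y₃ y₄ ≤ √2 * vrBirth y₁ y₂ y₃ y₄ := by
  set M := max (max (dist y₁ y₃) (dist y₃ y₂)) (max (dist y₂ y₄) (dist y₄ y₁))
  set m := min (dist y₁ y₂) (dist y₃ y₄)
  have hM : 0 ≤ M := dist_nonneg.trans ((le_max_left _ _).trans (le_max_left _ _))
  have hm : 0 ≤ m := le_min dist_nonneg dist_nonneg
  have sides_le : dist y₁ y₃ ^ 2 + dist y₃ y₂ ^ 2 + dist y₂ y₄ ^ 2 + dist y₄ y₁ ^ 2 ≤
      4 * M ^ 2 := by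
    have h13 : dist y₁ y₃ ≤ M := (le_max_left _ _).trans (le_max_left _ _)
    have h32 : dist y₃ y₂ ≤ M := (le_max_right _ _).trans (le_max_left _ _)
    have h24 : dist y₂ y₄ ≤ M := (le_max_left _ _).trans (le_max_right _ _)
    have h41 : dist y₄ y₁ ≤ M := (le_max_right _ _).trans (le_max_right _ _)
    nlinarith [pow_le_pow_left₀ dist_nonneg h13 2, pow_le_pow_left₀ dist_nonneg h32 2,
      pow_le_pow_left₀ dist_nonneg h24 2, pow_le_pow_left₀ dist_nonneg h41 2]
  have diagonals_ge : 2 * m ^ 2 ≤ dist y₁ y₂ ^ 2 + dist y₃ y₄ ^ 2 := by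
    nlinarith [pow_le_pow_left₀ hm (min_le_left (dist y₁ y₂) (dist y₃ y₄)) 2,
      pow_le_pow_left₀ hm (min_le_right (dist y₁ y₂) (dist y₃ y₄)) 2]
  have hsq : m ^ 2 ≤ (√2 * M) ^ 2 := by
    rw [mul_pow, Real.sq_sqrt zero_le_two]
    linarith [dist_sq_add_dist_sq_le_sum_dist_sq y₁ y₂ y₃ y₄]
  have hmM : m ≤ √2 * M := (pow_le_pow_iff_left₀ hm (by positivity) two_ne_zero).mp hsq
  simp only [vrDeath, vrBirth]
  linarith

theorem dist_pt (a b c d : ℝ) : dist (pt a b) (pt c d) = √((a - c) ^ 2 + (b - d) ^ 2) := by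
  simp [EuclideanSpace.dist_eq, pt, Fin.sum_univ_two, Real.dist_eq, sq_abs]

theorem vrDeath_diamond : vrDeath (pt 0 0) (pt 2 0) (pt 1 1) (pt 1 (-1)) = 1 := by
  simp only [vrDeath, dist_pt]
  norm_num

theorem vrBirth_diamond : vrBirth (pt 0 0) (pt 2 0) (pt 1 1) (pt 1 (-1)) = 1 / √2 := by
  simp only [vrBirth, dist_pt]
  norm_num [Real.sqrt_div_self']

theorem stmt_11 :
    -- upper bound: any four-point Vietoris–Rips 1-cycle with deathtime ≤ 1 has
    -- additive lifetime at most 1 - 1/√2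
    (∀ y₁ y₂ y₃ y₄ : EuclideanSpace ℝ (Fin 2),
      vrDeath y₁ y₂ y₃ y₄ ≤ 1 →
      vrBirth y₁ y₂ y₃ y₄ ≤ vrDeath y₁ y₂ y₃ y₄ →
      vrDeath y₁ y₂ y₃ y₄ - vrBirth y₁ y₂ y₃ y₄ ≤ 1 - 1 / Real.sqrt 2) ∧
    -- realized by the equilateral diamond (0,0), (2,0), (1,1), (1,-1)
    -- of side length √2
    (vrDeath (pt 0 0) (pt 2 0) (pt 1 1) (pt 1 (-1)) ≤ 1 ∧
      dist (pt 0 0) (pt 1 1) = Real.sqrt 2 ∧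
      vrDeath (pt 0 0) (pt 2 0) (pt 1 1) (pt 1 (-1)) -
        vrBirth (pt 0 0) (pt 2 0) (pt 1 1) (pt 1 (-1)) = 1 - 1 / Real.sqrt 2) := by
  refine ⟨fun y₁ y₂ y₃ y₄ hD _ => ?_, vrDeath_diamond.le, by norm_num [dist_pt], ?_⟩
  · have hB : vrDeath y₁ y₂ y₃ y₄ / √2 ≤ vrBirth y₁ y₂ y₃ y₄ := by
      rw [div_le_iff₀' (by positivity)]
      exact vrDeath_le_sqrt_two_mul_vrBirth y₁ y₂ y₃ y₄
    have hfactor : 0 ≤ 1 - 1 / √2 := by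
      rw [sub_nonneg, div_le_one (by positivity)]
      exact Real.one_lt_sqrt_two.le
    calc vrDeath y₁ y₂ y₃ y₄ - vrBirth y₁ y₂ y₃ y₄
        ≤ vrDeath y₁ y₂ y₃ y₄ * (1 - 1 / √2) := by
          linarith [mul_one_div (vrDeath y₁ y₂ y₃ y₄) √2]
      _ ≤ 1 - 1 / √2 := mul_le_of_le_one_left hfactor hD
  · rw [vrDeath_diamond, vrBirth_diamond]
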